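/- Let A be a C*-algebra, a, b ∈ A⁺ with a ≼ b (Cuntz subequivalence). Then for every ε > 0 there exists x ∈ A with (a - ε)₊ = x*x and xx* ∈ closure(bAb). -/

import Mathlib

set_option maxHeartbeats 1600000

open scoped CStarAlgebra

/-- `(a - ε)₊`: the functional calculus of `a` under `s ↦ max (s - ε) 0`. -/
noncomputable def cutDown {A : Type*} [NonUnitalCStarAlgebra A] (a : A) (ε : ℝ) : A :=
  cfcₙ (fun s : ℝ => max (s - ε) 0) a

namespace MvNAux

/-! ### Scalar functions -/

/-- real square root cut off at 0 -/
noncomputable def rsq (t : ℝ) : ℝ := Real.sqrt (max t 0)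

lemma rsq_cont : Continuous rsq := by unfold rsq; fun_prop

lemma rsq_zero : rsq 0 = 0 := by simp [rsq]

lemma rsq_nonneg (t : ℝ) : 0 ≤ rsq t := Real.sqrt_nonneg _

lemma rsq_sq {t : ℝ} (ht : 0 ≤ t) : rsq t * rsq t = t := by
  rw [rsq, Real.mul_self_sqrt (le_max_of_le_right le_rfl)]
  exact max_eq_left ht

/-- the function `f` with `f t * ((t - δ) * f t) = (t - ε)₊` -/
noncomputable def fql (δ ε t : ℝ) : ℝ := Real.sqrt (max (t - ε) 0 / max (t - δ) (ε - δ))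

lemma fql_cont {δ ε : ℝ} (h : δ < ε) : Continuous (fql δ ε) := by
  apply Real.continuous_sqrt.comp
  apply Continuous.div (by fun_prop) (by fun_prop)
  intro t
  have : (0:ℝ) < max (t - δ) (ε - δ) := lt_of_lt_of_le (by linarith) (le_max_right _ _)
  exact this.ne'

lemma fql_zero {δ ε : ℝ} (hδ : 0 ≤ δ) (h : δ < ε) : fql δ ε 0 = 0 := by
  have h1 : max (0 - ε) 0 = 0 := max_eq_right (by linarith)
  rw [fql, h1, zero_div, Real.sqrt_zero]

lemma fql_key {δ ε : ℝ} (hδ : 0 ≤ δ) (h : δ < ε) (t : ℝ) :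
    fql δ ε t * ((t - δ) * fql δ ε t) = max (t - ε) 0 := by
  have h0 : (0:ℝ) < max (t - δ) (ε - δ) := lt_of_lt_of_le (by linarith) (le_max_right _ _)
  have hnum : 0 ≤ max (t - ε) 0 / max (t - δ) (ε - δ) :=
    div_nonneg (le_max_right _ _) h0.le
  have h1 : fql δ ε t * ((t - δ) * fql δ ε t)
      = (max (t - ε) 0 / max (t - δ) (ε - δ)) * (t - δ) := by
    rw [show fql δ ε t * ((t - δ) * fql δ ε t) = (fql δ ε t * fql δ ε t) * (t - δ) by ring,
      fql, Real.mul_self_sqrt hnum]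
  rw [h1]
  rcases le_or_gt t ε with hle | hlt
  · rw [max_eq_right (by linarith : t - ε ≤ 0), zero_div, zero_mul]
  · have h2 : max (t - δ) (ε - δ) = t - δ := max_eq_left (by linarith)
    have h3 : max (t - ε) 0 = t - ε := max_eq_left (by linarith)
    rw [h2, h3, div_mul_cancel₀ _ (by linarith : t - δ ≠ 0)]

/-- the resolvent-type square root function -/
noncomputable def hfun (ν t : ℝ) : ℝ := (Real.sqrt (max t 0 + ν))⁻¹

lemma hfun_cont {ν : ℝ} (hν : 0 < ν) : Continuous (hfun ν) := by
  apply Continuous.inv₀ (by fun_prop)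
  intro t
  exact (Real.sqrt_pos.mpr (by positivity)).ne'

lemma scalar_phi {ν t : ℝ} (hν : 0 < ν) (ht : 0 ≤ t) :
    hfun ν t * (t * hfun ν t) - 1 = -(ν / (max t 0 + ν)) := by
  rw [hfun, max_eq_left ht]
  have hX : 0 < t + ν := by linarith
  have h1 : (Real.sqrt (t + ν))⁻¹ * (t * (Real.sqrt (t + ν))⁻¹)
      = t * ((Real.sqrt (t + ν)) * (Real.sqrt (t + ν)))⁻¹ := by
    rw [mul_inv]; ring
  rw [h1, Real.mul_self_sqrt hX.le]
  field_simp
  ring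

lemma scalar_E1 {ν t : ℝ} (hν : 0 < ν) (ht : 0 ≤ t) :
    (ν / (max t 0 + ν)) * t ≤ ν := by
  rw [max_eq_left ht, div_mul_eq_mul_div, div_le_iff₀ (by linarith)]
  nlinarith

lemma scalar_E2aux {ν μ t : ℝ} (hν : 0 < ν) (hμ : 0 < μ) (ht : 0 ≤ t) (hνμ : ν ≤ μ) :
    ((hfun ν t - hfun μ t) * (t * (hfun ν t - hfun μ t))) * t ≤ μ - ν := by
  simp only [hfun, max_eq_left ht]
  set P := Real.sqrt (t + ν) with hP
  set Q := Real.sqrt (t + μ) with hQ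
  have hP0 : 0 < P := Real.sqrt_pos.mpr (by linarith)
  have hQ0 : 0 < Q := Real.sqrt_pos.mpr (by linarith)
  have hPQ : P ≤ Q := Real.sqrt_le_sqrt (by linarith)
  have hP2 : P * P = t + ν := Real.mul_self_sqrt (by linarith)
  have hQ2 : Q * Q = t + μ := Real.mul_self_sqrt (by linarith)
  have htP : t ≤ P * P := by rw [hP2]; linarith
  have htQ : t ≤ Q * Q := by rw [hQ2]; linarith
  have hinv : P⁻¹ - Q⁻¹ = (Q - P) / (P * Q) := by
    field_simp
  rw [hinv]
  have key : ((Q - P) / (P * Q) * (t * ((Q - P) / (P * Q)))) * t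
      = (Q - P)^2 * t^2 / ((P * Q)^2) := by ring
  rw [key, div_le_iff₀ (by positivity)]
  have h2 : (Q - P) * (Q + P) = μ - ν := by nlinarith
  have hQP : 0 ≤ Q - P := sub_nonneg.mpr hPQ
  have hA : (Q - P)^2 * t^2 ≤ (Q - P)^2 * ((P*P)*(Q*Q)) := by
    apply mul_le_mul_of_nonneg_left _ (sq_nonneg _)
    nlinarith [mul_le_mul htP htQ ht (mul_nonneg hP0.le hP0.le)]
  have hB : (Q - P)^2 * ((P*P)*(Q*Q)) ≤ ((Q-P)*(Q+P)) * ((P*P)*(Q*Q)) := by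
    apply mul_le_mul_of_nonneg_right _ (by positivity)
    nlinarith
  calc (Q - P)^2 * t^2 ≤ ((Q-P)*(Q+P)) * ((P*P)*(Q*Q)) := hA.trans hB
    _ = (μ - ν) * (P * Q)^2 := by rw [h2]; ring

lemma scalar_E2 {ν μ t : ℝ} (hν : 0 < ν) (hμ : 0 < μ) (ht : 0 ≤ t) :
    ((hfun ν t - hfun μ t) * (t * (hfun ν t - hfun μ t))) * t ≤ |ν - μ| := by
  rcases le_total ν μ with h | h
  · rw [abs_of_nonpos (by linarith), neg_sub]
    exact scalar_E2aux hν hμ ht h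
  · rw [abs_of_nonneg (by linarith)]
    have h2 := scalar_E2aux hμ hν ht h
    calc ((hfun ν t - hfun μ t) * (t * (hfun ν t - hfun μ t))) * t
        = ((hfun μ t - hfun ν t) * (t * (hfun μ t - hfun ν t))) * t := by ring
      _ ≤ ν - μ := h2

lemma scalar_S1 {u t : ℝ} (hu : 0 < u) (ht : 0 ≤ t) :
    |rsq t - t * (rsq t * (max t 0 + u)⁻¹)| ≤ Real.sqrt u := by
  rw [rsq, max_eq_left ht]
  have hpos : 0 < t + u := by linarith
  have heq : Real.sqrt t - t * (Real.sqrt t * (t + u)⁻¹) = Real.sqrt t * u / (t + u) := by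
    field_simp
    ring
  rw [heq, abs_of_nonneg (by positivity), div_le_iff₀ hpos]
  nlinarith [Real.sq_sqrt ht, Real.sq_sqrt hu.le, Real.sqrt_nonneg t, Real.sqrt_nonneg u,
    mul_nonneg (Real.sqrt_nonneg u) (sq_nonneg (Real.sqrt t - Real.sqrt u))]

/-! ### C⋆-algebra lemmas in a unital C⋆-algebra -/

variable {B : Type*} [CStarAlgebra B] [PartialOrder B] [StarOrderedRing B]

lemma cfc_rsq_mul_self (g : B) (hg : 0 ≤ g) : cfc rsq g * cfc rsq g = g := by
  rw [← cfc_mul rsq rsq g rsq_cont.continuousOn rsq_cont.continuousOn]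
  have h1 : cfc (fun t => rsq t * rsq t) g = cfc (fun t : ℝ => t) g :=
    cfc_congr fun t ht => rsq_sq (spectrum_nonneg_of_nonneg hg ht)
  rw [h1, cfc_id' ℝ g (IsSelfAdjoint.of_nonneg hg)]

/-- The key norm estimate: conjugating `cfc w c` by `√g` with `0 ≤ g ≤ c` is bounded by
`sup (w t * t)`. -/
lemma conj_bound (g c : B) (hg : 0 ≤ g) (hgc : g ≤ c) (w : ℝ → ℝ)
    (hw : Continuous w) (hw0 : ∀ t, 0 ≤ w t) (M : ℝ) (hM : 0 ≤ M)
    (hsup : ∀ t ∈ spectrum ℝ c, w t * t ≤ M) :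
    ‖cfc rsq g * (cfc w c * cfc rsq g)‖ ≤ M := by
  have hc : 0 ≤ c := hg.trans hgc
  have hcsa : IsSelfAdjoint c := .of_nonneg hc
  have hgsa : IsSelfAdjoint g := .of_nonneg hg
  have hwc : Continuous fun t => Real.sqrt (w t) := Real.continuous_sqrt.comp hw
  set u := cfc (fun t => Real.sqrt (w t)) c with hu
  have husa : IsSelfAdjoint u := cfc_predicate _ c
  set r := cfc rsq g with hr
  have hrsa : IsSelfAdjoint r := cfc_predicate _ g
  have hrr : r * r = g := cfc_rsq_mul_self g hg
  have huu : u * u = cfc w c := by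
    rw [hu, ← cfc_mul _ _ c hwc.continuousOn hwc.continuousOn]
    exact cfc_congr fun t _ => Real.mul_self_sqrt (hw0 t)
  rw [← huu]
  have h1 : r * (u * u * r) = star (u * r) * (u * r) := by
    simp only [star_mul, husa.star_eq, hrsa.star_eq, mul_assoc]
  rw [h1, CStarRing.norm_star_mul_self]
  rw [← CStarRing.norm_self_mul_star (x := u * r)]
  have h3 : u * r * star (u * r) = u * (g * u) := by
    simp only [star_mul, husa.star_eq, hrsa.star_eq, mul_assoc]
    rw [← mul_assoc r r u, hrr]
  rw [h3]
  have h4 : u * (g * u) ≤ u * (c * u) := by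
    have h := star_left_conjugate_le_conjugate hgc u
    rw [husa.star_eq] at h
    simpa [mul_assoc] using h
  have h5 : (0:B) ≤ u * (g * u) := by
    have h := star_left_conjugate_nonneg hg u
    rw [husa.star_eq] at h
    simpa [mul_assoc] using h
  have hsplit : cfc (fun t => Real.sqrt (w t) * (t * Real.sqrt (w t))) c = u * (c * u) := by
    rw [cfc_mul _ _ c hwc.continuousOn ((show Continuous fun t => t * Real.sqrt (w t) from continuous_id'.mul hwc).continuousOn),
      cfc_mul _ _ c continuous_id'.continuousOn hwc.continuousOn,
      cfc_id' ℝ c hcsa, hu]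
  calc ‖u * (g * u)‖ ≤ ‖u * (c * u)‖ := CStarAlgebra.norm_le_norm_of_nonneg_of_le h5 h4
    _ = ‖cfc (fun t => Real.sqrt (w t) * (t * Real.sqrt (w t))) c‖ := by rw [hsplit]
    _ ≤ M := by
        apply norm_cfc_le hM
        intro t ht
        have ht0 : 0 ≤ t := spectrum_nonneg_of_nonneg hc ht
        have heq : Real.sqrt (w t) * (t * Real.sqrt (w t)) = w t * t := by
          rw [show Real.sqrt (w t) * (t * Real.sqrt (w t))
              = Real.sqrt (w t) * Real.sqrt (w t) * t by ring,
            Real.mul_self_sqrt (hw0 t)]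
        rw [Real.norm_eq_abs, heq, abs_of_nonneg (mul_nonneg (hw0 t) ht0)]
        exact hsup t ht

lemma absE1 (g c z : B) (hg : 0 ≤ g) (hgc : g ≤ c) (hzz : star z * z = c)
    {ν : ℝ} (hν : 0 < ν) :
    ‖star (z * (cfc (hfun ν) c * cfc rsq g)) * (z * (cfc (hfun ν) c * cfc rsq g)) - g‖ ≤ ν := by
  have hc : 0 ≤ c := hg.trans hgc
  have hcsa : IsSelfAdjoint c := .of_nonneg hc
  have hHc : Continuous (hfun ν) := hfun_cont hν
  set H := cfc (hfun ν) c with hH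
  have hHsa : IsSelfAdjoint H := cfc_predicate _ c
  set r := cfc rsq g with hr
  have hrsa : IsSelfAdjoint r := cfc_predicate _ g
  have hrr : r * r = g := cfc_rsq_mul_self g hg
  have hw1 : star (z * (H * r)) * (z * (H * r)) = r * (H * (c * (H * r))) := by
    simp only [star_mul, hHsa.star_eq, hrsa.star_eq, mul_assoc]
    rw [← mul_assoc (star z) z (H * r), hzz]
  have hHcH : cfc (fun t => hfun ν t * (t * hfun ν t)) c * r = H * (c * (H * r)) := by
    rw [cfc_mul _ _ c hHc.continuousOn ((show Continuous fun t => t * hfun ν t from continuous_id'.mul hHc).continuousOn),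
      cfc_mul _ _ c continuous_id'.continuousOn hHc.continuousOn,
      cfc_id' ℝ c hcsa, hH]
    simp only [mul_assoc]
  have hdiff : star (z * (H * r)) * (z * (H * r)) - g
      = r * ((cfc (fun t => hfun ν t * (t * hfun ν t)) c - 1) * r) := by
    rw [hw1, ← hHcH, ← hrr]
    noncomm_ring
  have hsub : cfc (fun t => hfun ν t * (t * hfun ν t)) c - 1
      = cfc (fun t => hfun ν t * (t * hfun ν t) - 1) c := by
    rw [cfc_sub _ _ c ((show Continuous fun t => hfun ν t * (t * hfun ν t) from hHc.mul (continuous_id'.mul hHc)).continuousOn) continuousOn_const,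
      cfc_const_one ℝ c hcsa]
  have hcongr : cfc (fun t => hfun ν t * (t * hfun ν t) - 1) c
      = -(cfc (fun t => ν / (max t 0 + ν)) c) := by
    rw [← cfc_neg]
    exact cfc_congr fun t ht => by
      rw [scalar_phi hν (spectrum_nonneg_of_nonneg hc ht)]
  rw [hdiff, hsub, hcongr]
  have hneg : r * (-(cfc (fun t => ν / (max t 0 + ν)) c) * r)
      = -(r * (cfc (fun t => ν / (max t 0 + ν)) c * r)) := by noncomm_ring
  rw [hneg, norm_neg, hr]
  refine conj_bound g c hg hgc _ ?_ ?_ ν hν.le ?_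
  · apply Continuous.div continuous_const (by fun_prop)
    intro t
    positivity
  · intro t
    positivity
  · intro t ht
    exact scalar_E1 hν (spectrum_nonneg_of_nonneg hc ht)

lemma absE2 (g c z : B) (hg : 0 ≤ g) (hgc : g ≤ c) (hzz : star z * z = c)
    {ν μ : ℝ} (hν : 0 < ν) (hμ : 0 < μ) :
    ‖z * (cfc (hfun ν) c * cfc rsq g) - z * (cfc (hfun μ) c * cfc rsq g)‖ ^ 2 ≤ |ν - μ| := by
  have hc : 0 ≤ c := hg.trans hgc
  have hcsa : IsSelfAdjoint c := .of_nonneg hc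
  have hHc : Continuous (hfun ν) := hfun_cont hν
  have hHc' : Continuous (hfun μ) := hfun_cont hμ
  have hdc : Continuous fun t => hfun ν t - hfun μ t := hHc.sub hHc'
  set G := cfc (fun t => hfun ν t - hfun μ t) c with hG
  have hGsa : IsSelfAdjoint G := cfc_predicate _ c
  set r := cfc rsq g with hr
  have hrsa : IsSelfAdjoint r := cfc_predicate _ g
  have hGdiff : G = cfc (hfun ν) c - cfc (hfun μ) c := by
    rw [hG, cfc_sub _ _ c hHc.continuousOn hHc'.continuousOn]
  have hveq : z * (cfc (hfun ν) c * cfc rsq g) - z * (cfc (hfun μ) c * cfc rsq g)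
      = z * (G * r) := by
    rw [hGdiff, ← hr]
    noncomm_ring
  rw [hveq]
  have hsq : ‖z * (G * r)‖ ^ 2 = ‖star (z * (G * r)) * (z * (G * r))‖ := by
    rw [CStarRing.norm_star_mul_self, sq]
  rw [hsq]
  have hw1 : star (z * (G * r)) * (z * (G * r)) = r * (G * (c * (G * r))) := by
    simp only [star_mul, hGsa.star_eq, hrsa.star_eq, mul_assoc]
    rw [← mul_assoc (star z) z (G * r), hzz]
  have hGcG : cfc (fun t => (hfun ν t - hfun μ t) * (t * (hfun ν t - hfun μ t))) c * r
      = G * (c * (G * r)) := by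
    rw [cfc_mul _ _ c hdc.continuousOn ((show Continuous fun t => t * (hfun ν t - hfun μ t) from continuous_id'.mul hdc).continuousOn),
      cfc_mul _ _ c continuous_id'.continuousOn hdc.continuousOn,
      cfc_id' ℝ c hcsa, hG]
    simp only [mul_assoc]
  have hcongr : cfc (fun t => (hfun ν t - hfun μ t) * (t * (hfun ν t - hfun μ t))) c
      = cfc (fun t => (hfun ν t - hfun μ t) ^ 2 * max t 0) c := by
    apply cfc_congr
    intro t ht
    have ht0 : 0 ≤ t := spectrum_nonneg_of_nonneg hc ht
    simp only [max_eq_left ht0]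
    ring
  rw [hw1, ← hGcG, hcongr, hr]
  refine conj_bound g c hg hgc _ ?_ ?_ _ (abs_nonneg _) ?_
  · fun_prop
  · intro t
    positivity
  · intro t ht
    have ht0 : 0 ≤ t := spectrum_nonneg_of_nonneg hc ht
    calc (hfun ν t - hfun μ t) ^ 2 * max t 0 * t
        = ((hfun ν t - hfun μ t) * (t * (hfun ν t - hfun μ t))) * t := by
          rw [max_eq_left ht0]; ring
      _ ≤ |ν - μ| := scalar_E2 hν hμ ht0

/-! ### hereditary subalgebra lemma -/

lemma sqrt_conj_mem {A : Type*} [NonUnitalCStarAlgebra A] [PartialOrder A] [StarOrderedRing A]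
    (b : A) (hb : 0 ≤ b) (m : A) :
    cfcₙ rsq b * m * cfcₙ rsq b ∈ closure {z : A | ∃ c : A, z = b * c * b} := by
  have hbsa : IsSelfAdjoint b := .of_nonneg hb
  set q : ℕ → ℝ → ℝ := fun k t => rsq t * (max t 0 + 1/(k+1))⁻¹ with hq
  have hqc : ∀ k : ℕ, Continuous (q k) := by
    intro k
    apply rsq_cont.mul
    apply Continuous.inv₀ (by fun_prop)
    intro t
    positivity
  have hq0 : ∀ k : ℕ, q k 0 = 0 := fun k => by simp [hq, rsq_zero]
  set w : ℕ → A := fun k => cfcₙ (q k) b with hwdef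
  have hbw : ∀ k, b * w k = cfcₙ (fun t => t * q k t) b := by
    intro k
    simp only [hwdef]
    rw [cfcₙ_mul _ _ b continuous_id'.continuousOn rfl (hqc k).continuousOn (hq0 k),
      cfcₙ_id' ℝ b hbsa]
  have hwb : ∀ k, w k * b = cfcₙ (fun t => t * q k t) b := by
    intro k
    simp only [hwdef]
    rw [show (fun t : ℝ => t * q k t) = fun t => q k t * t from funext fun t => mul_comm _ _,
      cfcₙ_mul _ _ b (hqc k).continuousOn (hq0 k) continuous_id'.continuousOn rfl,
      cfcₙ_id' ℝ b hbsa]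
  have hest : ∀ k : ℕ, ‖cfcₙ rsq b - b * w k‖ ≤ Real.sqrt (1/(k+1)) := by
    intro k
    rw [hbw k, ← cfcₙ_sub rsq (fun t => t * q k t) b rsq_cont.continuousOn rsq_zero
      ((continuous_id'.mul (hqc k)).continuousOn) (by simp [hq0 k])]
    apply norm_cfcₙ_le
    intro t ht
    have ht0 : 0 ≤ t := quasispectrum_nonneg_of_nonneg b hb t ht
    have h1 := scalar_S1 (u := 1/(k+1)) (by positivity) ht0
    simpa [Real.norm_eq_abs, hq, mul_assoc] using h1
  have hten : Filter.Tendsto (fun k : ℕ => b * w k) Filter.atTop (nhds (cfcₙ rsq b)) := by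
    rw [← tendsto_sub_nhds_zero_iff]
    have hb2 : ∀ k : ℕ, ‖b * w k - cfcₙ rsq b‖ ≤ Real.sqrt (1/(k+1)) := fun k => by
      rw [norm_sub_rev]; exact hest k
    have hs : Filter.Tendsto (fun k : ℕ => Real.sqrt (1/(k+1))) Filter.atTop (nhds 0) := by
      have h0 : Filter.Tendsto (fun k : ℕ => 1/((k:ℝ)+1)) Filter.atTop (nhds 0) :=
        tendsto_one_div_add_atTop_nhds_zero_nat
      have h2 := (Real.continuous_sqrt.tendsto 0).comp h0
      rw [Real.sqrt_zero] at h2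
      exact h2
    exact squeeze_zero_norm hb2 hs
  have hten2 : Filter.Tendsto (fun k : ℕ => (b * w k) * m * (b * w k)) Filter.atTop
      (nhds (cfcₙ rsq b * m * cfcₙ rsq b)) :=
    (hten.mul tendsto_const_nhds).mul hten
  apply mem_closure_of_tendsto hten2
  apply Filter.Eventually.of_forall
  intro k
  refine ⟨w k * m * w k, ?_⟩
  have h3 : (b * w k) * m * (b * w k) = (b * w k) * m * (w k * b) := by
    rw [hbw k, hwb k]
  rw [h3]
  noncomm_ring

end MvNAux

open Filter in
theorem exists_mvn_witness_of_cuntz_below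
    {A : Type*} [NonUnitalCStarAlgebra A] [PartialOrder A] [StarOrderedRing A]
    (a b : A) (ha : 0 ≤ a) (hb : 0 ≤ b)
    (hcuntz : ∃ d : ℕ → A, Tendsto (fun n => d n * b * star (d n)) atTop (nhds a))
    (ε : ℝ) (hε : 0 < ε) :
    ∃ x : A, cutDown a ε = star x * x ∧
      x * star x ∈ closure {z : A | ∃ c : A, z = b * c * b} := by
  classical
  obtain ⟨d, hd⟩ := hcuntz
  obtain ⟨n₀, hn₀⟩ := Metric.tendsto_atTop.mp hd ε hε
  set e₀ := d n₀ with he₀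
  set c₀ : A := e₀ * b * star e₀ with hc₀def
  have hδε : ‖a - c₀‖ < ε := by
    have h := hn₀ n₀ le_rfl
    rw [dist_eq_norm, norm_sub_rev] at h
    exact h
  set δ := ‖a - c₀‖ with hδdef
  have hδ0 : 0 ≤ δ := norm_nonneg _
  -- square roots
  set bh := cfcₙ MvNAux.rsq b with hbhdef
  have hbh0 : 0 ≤ bh := cfcₙ_nonneg fun t _ => MvNAux.rsq_nonneg t
  have hbhsa : IsSelfAdjoint bh := .of_nonneg hbh0
  have hbhsq : bh * bh = b := by
    rw [hbhdef, ← cfcₙ_mul _ _ b MvNAux.rsq_cont.continuousOn MvNAux.rsq_zero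
      MvNAux.rsq_cont.continuousOn MvNAux.rsq_zero]
    have h1 : cfcₙ (fun t => MvNAux.rsq t * MvNAux.rsq t) b = cfcₙ (fun t : ℝ => t) b :=
      cfcₙ_congr fun t ht => MvNAux.rsq_sq (quasispectrum_nonneg_of_nonneg b hb t ht)
    rw [h1, cfcₙ_id' ℝ b (IsSelfAdjoint.of_nonneg hb)]
  have hc₀0 : 0 ≤ c₀ := by
    have h1 : c₀ = (e₀ * bh) * star (e₀ * bh) := by
      rw [star_mul, hbhsa.star_eq, hc₀def, ← hbhsq]
      noncomm_ring
    rw [h1]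
    exact mul_star_self_nonneg _
  -- the function f
  set f := MvNAux.fql δ ε with hfdef
  have hfc : Continuous f := MvNAux.fql_cont hδε
  set fA := cfcₙ f a with hfAdef
  have hfAsa : IsSelfAdjoint fA := cfcₙ_predicate f a
  set c : A := fA * c₀ * fA with hcdef
  have hc0 : 0 ≤ c := by
    have h := star_left_conjugate_nonneg hc₀0 fA
    rwa [hfAsa.star_eq] at h
  set g : A := cutDown a ε with hgdef
  have hg0 : 0 ≤ g := cfcₙ_nonneg fun t _ => le_max_right _ _
  set gh := cfcₙ MvNAux.rsq g with hghdef
  set z : A := bh * (star e₀ * fA) with hzdef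
  have hzz : star z * z = c := by
    have h1 : star z = fA * e₀ * bh := by
      rw [hzdef, star_mul, star_mul, star_star, hbhsa.star_eq, hfAsa.star_eq]
    rw [h1, hzdef, hcdef, hc₀def]
    calc fA * e₀ * bh * (bh * (star e₀ * fA))
        = fA * (e₀ * (bh * bh) * star e₀) * fA := by noncomm_ring
      _ = fA * (e₀ * b * star e₀) * fA := by rw [hbhsq]
  clear_value e₀ c₀ bh fA c g gh z
  -- pass to the unitization
  have ha' : (0:A⁺¹) ≤ (a : A⁺¹) := Unitization.inr_nonneg_iff.mpr ha
  have ha'sa : IsSelfAdjoint (a : A⁺¹) := .of_nonneg ha'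
  have hmax0 : max ((0:ℝ) - ε) 0 = (0:ℝ) := max_eq_right (by linarith)
  have hga' : (g : A⁺¹) = cfc (fun t : ℝ => max (t - ε) 0) (a : A⁺¹) := by
    rw [hgdef]
    exact Unitization.real_cfcₙ_eq_cfc_inr a _ hmax0
  have hF : (fA : A⁺¹) = cfc f (a : A⁺¹) := by
    rw [hfAdef]
    exact Unitization.real_cfcₙ_eq_cfc_inr a f (MvNAux.fql_zero hδ0 hδε)
  have hFsa : IsSelfAdjoint (cfc f (a : A⁺¹)) := cfc_predicate _ _
  have hkey : (g : A⁺¹) = cfc f (a : A⁺¹)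
      * (((a : A⁺¹) - algebraMap ℝ A⁺¹ δ) * cfc f (a : A⁺¹)) := by
    rw [hga']
    have h2 : cfc (fun t : ℝ => max (t - ε) 0) (a : A⁺¹)
        = cfc (fun t => f t * ((t - δ) * f t)) (a : A⁺¹) :=
      cfc_congr fun t _ => (MvNAux.fql_key hδ0 hδε t).symm
    rw [h2, cfc_mul _ _ (a : A⁺¹) hfc.continuousOn
        ((show Continuous fun t => (t - δ) * f t from (continuous_id'.sub continuous_const).mul hfc).continuousOn),
      cfc_mul _ _ (a : A⁺¹) (show Continuous fun t : ℝ => t - δ from continuous_id'.sub continuous_const).continuousOn hfc.continuousOn,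
      cfc_sub _ _ (a : A⁺¹) continuous_id'.continuousOn continuousOn_const,
      cfc_id' ℝ (a : A⁺¹) ha'sa, cfc_const δ (a : A⁺¹) ha'sa]
  have hwle : (a : A⁺¹) - algebraMap ℝ A⁺¹ δ ≤ (c₀ : A⁺¹) := by
    have hsa : IsSelfAdjoint ((c₀ - a : A) : A⁺¹) := by
      rw [Unitization.inr_sub ℂ]
      exact ((IsSelfAdjoint.of_nonneg (Unitization.inr_nonneg_iff.mpr hc₀0)).sub
        (IsSelfAdjoint.of_nonneg ha'))
    have h3 := IsSelfAdjoint.neg_algebraMap_norm_le_self (a := ((c₀ - a : A) : A⁺¹)) hsa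
    have hnorm : ‖((c₀ - a : A) : A⁺¹)‖ = δ := by
      rw [Unitization.norm_inr, norm_sub_rev]
    rw [hnorm] at h3
    calc (a : A⁺¹) - algebraMap ℝ A⁺¹ δ
        = (a : A⁺¹) + (-(algebraMap ℝ A⁺¹ δ)) := by rw [sub_eq_add_neg]
      _ ≤ (a : A⁺¹) + ((c₀ - a : A) : A⁺¹) := add_le_add_right h3 _
      _ = (c₀ : A⁺¹) := by rw [Unitization.inr_sub ℂ]; abel
  have hconj : (g : A⁺¹) ≤ (c : A⁺¹) := by
    rw [hkey]
    have h6 := star_left_conjugate_le_conjugate hwle (cfc f (a : A⁺¹))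
    rw [hFsa.star_eq] at h6
    have h7 : cfc f (a : A⁺¹) * (c₀ : A⁺¹) * cfc f (a : A⁺¹) = (c : A⁺¹) := by
      rw [← hF, hcdef, Unitization.inr_mul ℂ (fA * c₀) fA, Unitization.inr_mul ℂ fA c₀]
    calc cfc f (a : A⁺¹) * (((a : A⁺¹) - algebraMap ℝ A⁺¹ δ) * cfc f (a : A⁺¹))
        = cfc f (a : A⁺¹) * ((a : A⁺¹) - algebraMap ℝ A⁺¹ δ) * cfc f (a : A⁺¹) := by
          rw [mul_assoc]
      _ ≤ cfc f (a : A⁺¹) * (c₀ : A⁺¹) * cfc f (a : A⁺¹) := h6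
      _ = (c : A⁺¹) := h7
  have hg0' : (0:A⁺¹) ≤ (g : A⁺¹) := Unitization.inr_nonneg_iff.mpr hg0
  have hc0' : (0:A⁺¹) ≤ (c : A⁺¹) := Unitization.inr_nonneg_iff.mpr hc0
  have hcsa' : IsSelfAdjoint (c : A⁺¹) := .of_nonneg hc0'
  have hzz' : star ((z : A) : A⁺¹) * ((z : A) : A⁺¹) = ((c : A) : A⁺¹) := by
    rw [← Unitization.inr_star, ← Unitization.inr_mul, hzz]
  have hgh' : ((gh : A) : A⁺¹) = cfc MvNAux.rsq ((g : A) : A⁺¹) := by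
    rw [hghdef]
    exact Unitization.real_cfcₙ_eq_cfc_inr g MvNAux.rsq MvNAux.rsq_zero
  -- the approximating sequence
  set ν : ℕ → ℝ := fun n => 1/(n+1) with hνdef
  have hν0 : ∀ n, 0 < ν n := fun n => by simp only [hνdef]; positivity
  set ρ : ℕ → A := fun n =>
    cfcₙ (fun t => MvNAux.hfun (ν n) t - MvNAux.hfun (ν n) 0) c * gh
      + MvNAux.hfun (ν n) 0 • gh with hρdef
  have hρ' : ∀ n, ((ρ n : A) : A⁺¹)
      = cfc (MvNAux.hfun (ν n)) ((c : A) : A⁺¹) * cfc MvNAux.rsq ((g : A) : A⁺¹) := by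
    intro n
    have hHc : Continuous (MvNAux.hfun (ν n)) := MvNAux.hfun_cont (hν0 n)
    have e1 : ((cfcₙ (fun t => MvNAux.hfun (ν n) t - MvNAux.hfun (ν n) 0) c : A) : A⁺¹)
        = cfc (fun t => MvNAux.hfun (ν n) t - MvNAux.hfun (ν n) 0) ((c : A) : A⁺¹) :=
      Unitization.real_cfcₙ_eq_cfc_inr c _ (sub_self _)
    have e2 : cfc (fun t => MvNAux.hfun (ν n) t - MvNAux.hfun (ν n) 0) ((c : A) : A⁺¹)
        = cfc (MvNAux.hfun (ν n)) ((c : A) : A⁺¹) - algebraMap ℝ A⁺¹ (MvNAux.hfun (ν n) 0) := by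
      rw [cfc_sub _ _ ((c : A) : A⁺¹) hHc.continuousOn continuousOn_const,
        cfc_const _ ((c : A) : A⁺¹) hcsa']
    simp only [hρdef, Unitization.inr_add, Unitization.inr_mul, Unitization.inr_smul, e1, e2,
      hgh', sub_mul, Algebra.algebraMap_eq_smul_one, smul_mul_assoc, one_mul]
    abel
  set v : ℕ → A := fun n => z * ρ n with hvdef
  have hv' : ∀ n, ((v n : A) : A⁺¹)
      = ((z : A) : A⁺¹) * (cfc (MvNAux.hfun (ν n)) ((c : A) : A⁺¹)
        * cfc MvNAux.rsq ((g : A) : A⁺¹)) := by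
    intro n
    simp only [hvdef, Unitization.inr_mul, hρ' n]
  -- E1 : approximate equality
  have hE1 : ∀ n, ‖star (v n) * v n - g‖ ≤ ν n := by
    intro n
    have habs := MvNAux.absE1 (g := ((g : A) : A⁺¹)) (c := ((c : A) : A⁺¹))
      (z := ((z : A) : A⁺¹)) hg0' hconj hzz' (hν0 n)
    rw [← hv' n] at habs
    rw [← Unitization.norm_inr (𝕜 := ℂ), Unitization.inr_sub ℂ, Unitization.inr_mul,
      Unitization.inr_star]
    exact habs
  -- E2 : Cauchy estimate
  have hE2 : ∀ n m, ‖v n - v m‖ ^ 2 ≤ |ν n - ν m| := by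
    intro n m
    have habs := MvNAux.absE2 (g := ((g : A) : A⁺¹)) (c := ((c : A) : A⁺¹))
      (z := ((z : A) : A⁺¹)) hg0' hconj hzz' (hν0 n) (hν0 m)
    rw [← hv' n, ← hv' m] at habs
    rw [← Unitization.norm_inr (𝕜 := ℂ), Unitization.inr_sub ℂ]
    exact habs
  have hνanti : ∀ {n m : ℕ}, n ≤ m → ν m ≤ ν n := by
    intro n m h
    simp only [hνdef]
    apply one_div_le_one_div_of_le (by positivity)
    have : (n:ℝ) ≤ m := Nat.cast_le.mpr h
    linarith
  have hCau : CauchySeq v := by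
    apply cauchySeq_of_le_tendsto_0 (fun N => Real.sqrt (ν N)) ?_ ?_
    · intro n m N hn hm
      rw [dist_eq_norm]
      have h1 : ‖v n - v m‖ ^ 2 ≤ |ν n - ν m| := hE2 n m
      have h2 : |ν n - ν m| ≤ ν N := by
        rcases le_total (ν n) (ν m) with h | h
        · rw [abs_of_nonpos (by linarith), neg_sub]
          have h4 := hν0 n
          have h5 := hνanti hm
          linarith
        · rw [abs_of_nonneg (by linarith)]
          have h4 := hν0 m
          have h5 := hνanti hn
          linarith
      exact (Real.le_sqrt (norm_nonneg _) (hν0 N).le).mpr (h1.trans h2)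
    · have h0 : Tendsto (fun N : ℕ => 1/((N:ℝ)+1)) atTop (nhds 0) :=
        tendsto_one_div_add_atTop_nhds_zero_nat
      have h2 := (Real.continuous_sqrt.tendsto 0).comp h0
      rw [Real.sqrt_zero] at h2
      exact h2
  obtain ⟨x, hx⟩ := cauchySeq_tendsto_of_complete hCau
  refine ⟨x, ?_, ?_⟩
  · have t1 : Tendsto (fun n => star (v n) * v n) atTop (nhds (star x * x)) :=
      hx.star.mul hx
    have t2 : Tendsto (fun n => star (v n) * v n) atTop (nhds g) := by
      rw [← tendsto_sub_nhds_zero_iff]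
      apply squeeze_zero_norm hE1
      simpa [hνdef, one_div] using (tendsto_one_div_add_atTop_nhds_zero_nat (𝕜 := ℝ))
    exact tendsto_nhds_unique t2 t1
  · have hform : ∀ n, v n * star (v n)
        = bh * ((star e₀ * fA * ρ n) * star (star e₀ * fA * ρ n)) * bh := by
      intro n
      simp only [hvdef, hzdef, star_mul, hbhsa.star_eq, star_star]
      noncomm_ring
    have hmem : ∀ n, v n * star (v n) ∈ closure {y : A | ∃ c' : A, y = b * c' * b} := by
      intro n
      rw [hform n, hbhdef]
      exact MvNAux.sqrt_conj_mem b hb _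
    have t3 : Tendsto (fun n => v n * star (v n)) atTop (nhds (x * star x)) := hx.mul hx.star
    exact isClosed_closure.mem_of_tendsto t3 (Filter.Eventually.of_forall hmem)
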